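/- Let ν be a Borel measure on ℝ such that ν([-z,z]^c) ≤ C e^{−λz} for all z ≥ 1, where C, λ > 0. Then there exists a constant C' > 0 such that for all α with 0 < α ≤ (1 ∧ λ)/2, ∫_{[-1,1]^c} (exp(αz) − αz − 1) ν(dz) ≤ C' α². -/

import Mathlib

/-! On `|z| > 1` we have `exp (α z) - α z - 1 ≤ (α z)² exp (α |z|) ≤ α² z² exp (λ |z| / 2)`,
and `z² ≤ (32 / λ²) exp (λ |z| / 4)`, so the integral is at most `α²` times a multiple of
`∫_{|z| > 1} exp (3λ |z| / 4) dν`. This last integral is finite: on the shell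
`n + 1 < |z| ≤ n + 2` the integrand is at most `exp (3λ (n + 2) / 4)` while the tail bound gives
the shell mass at most `C exp (-λ (n + 1))`, and these products form a geometric series. -/

open MeasureTheory Real

lemma Real.exp_sub_sub_one_le_sq_mul_exp_abs (x : ℝ) : exp x - x - 1 ≤ x ^ 2 * exp |x| := by
  have hkey : exp x * (1 - x) ≤ 1 := by
    calc exp x * (1 - x) ≤ exp x * exp (-x) :=
          mul_le_mul_of_nonneg_left (by linarith [add_one_le_exp (-x)]) (exp_pos x).le
      _ = 1 := by rw [← exp_add, add_neg_cancel, exp_zero]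
  have hconv : exp x - x - 1 ≤ x * (exp x - 1) := by linarith
  refine hconv.trans ?_
  rcases le_or_gt 0 x with hx | hx
  · rw [abs_of_nonneg hx]
    have : exp x - 1 ≤ x * exp x := by linarith
    nlinarith [mul_le_mul_of_nonneg_left this hx]
  · have h1 : 1 - exp x ≤ -x := by linarith [add_one_le_exp x]
    have h2 : 1 ≤ exp |x| := one_le_exp (abs_nonneg x)
    nlinarith [mul_le_mul_of_nonneg_left h1 (neg_nonneg.mpr hx.le), sq_nonneg x]

lemma Real.sq_le_mul_exp_mul_abs {ε : ℝ} (hε : 0 < ε) (t : ℝ) :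
    t ^ 2 ≤ 2 / ε ^ 2 * exp (ε * |t|) := by
  have h := pow_div_factorial_le_exp (ε * |t|) (by positivity) 2
  rw [mul_pow, sq_abs, Nat.factorial_two, Nat.cast_two] at h
  rw [div_mul_eq_mul_div, le_div_iff₀ (by positivity)]
  nlinarith

lemma exp_mul_sub_sub_one_le {α lam : ℝ} (hα : 0 < α) (hαlam : α ≤ lam / 2) (z : ℝ) :
    exp (α * z) - α * z - 1 ≤ α ^ 2 * (32 / lam ^ 2) * exp (3 / 4 * lam * |z|) := by
  have hexp : exp |α * z| ≤ exp (lam / 2 * |z|) := by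
    rw [abs_mul, abs_of_pos hα]
    exact exp_le_exp.mpr (mul_le_mul_of_nonneg_right hαlam (abs_nonneg z))
  have hsq := sq_le_mul_exp_mul_abs (show 0 < lam / 4 by linarith) z
  calc exp (α * z) - α * z - 1 ≤ (α * z) ^ 2 * exp |α * z| :=
        exp_sub_sub_one_le_sq_mul_exp_abs _
    _ ≤ α ^ 2 * (2 / (lam / 4) ^ 2 * exp (lam / 4 * |z|)) * exp (lam / 2 * |z|) := by
      rw [mul_pow]
      exact mul_le_mul (mul_le_mul_of_nonneg_left hsq (sq_nonneg α)) hexp (exp_pos _).le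
        (by positivity)
    _ = α ^ 2 * (32 / lam ^ 2) * exp (3 / 4 * lam * |z|) := by
      rw [show 3 / 4 * lam * |z| = lam / 4 * |z| + lam / 2 * |z| by ring, exp_add]
      have : 0 < lam := by linarith
      field_simp
      ring

def absShell (n : ℕ) : Set ℝ := {x : ℝ | (n : ℝ) + 1 < |x| ∧ |x| ≤ (n : ℝ) + 2}

lemma mem_absShell {n : ℕ} {x : ℝ} :
    x ∈ absShell n ↔ (n : ℝ) + 1 < |x| ∧ |x| ≤ (n : ℝ) + 2 :=
  Iff.rfl

lemma setOf_one_lt_abs_subset_iUnion_absShell :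
    {x : ℝ | 1 < |x|} ⊆ ⋃ n, absShell n := by
  intro x (hx : 1 < |x|)
  have h2 : 2 ≤ ⌈|x|⌉₊ := by
    have : (1 : ℝ) < ⌈|x|⌉₊ := hx.trans_le (Nat.le_ceil _)
    exact_mod_cast this
  have hcast : ((⌈|x|⌉₊ - 2 : ℕ) : ℝ) = ⌈|x|⌉₊ - 2 := by push_cast [Nat.cast_sub h2]; rfl
  refine Set.mem_iUnion.mpr ⟨⌈|x|⌉₊ - 2, mem_absShell.mpr ⟨?_, ?_⟩⟩ <;> rw [hcast]
  · linarith [Nat.ceil_lt_add_one (abs_nonneg x)]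
  · linarith [Nat.le_ceil |x|]

section TailBound

variable {ν : Measure ℝ} {C lam c : ℝ}
  (htail : ∀ z : ℝ, 1 ≤ z → ν {x : ℝ | z < |x|} ≤ ENNReal.ofReal (C * exp (-lam * z)))
include htail

lemma setLIntegral_absShell_exp_mul_abs_le (hc : 0 ≤ c) (n : ℕ) :
    ∫⁻ z in absShell n, ENNReal.ofReal (exp (c * |z|)) ∂ν
      ≤ ENNReal.ofReal (C * exp (2 * c - lam)) * ENNReal.ofReal (exp (c - lam)) ^ n := by
  have hmass : ν (absShell n) ≤ ENNReal.ofReal (C * exp (-lam * ((n : ℝ) + 1))) :=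
    (measure_mono fun x hx => (mem_absShell.mp hx).1).trans
      (htail _ (by linarith [n.cast_nonneg (α := ℝ)]))
  have hreal : exp (c * ((n : ℝ) + 2)) * (C * exp (-lam * ((n : ℝ) + 1)))
      = C * exp (2 * c - lam) * exp (c - lam) ^ n := by
    rw [← exp_nat_mul, mul_left_comm, mul_assoc, ← exp_add, ← exp_add]
    ring_nf
  calc _ ≤ ∫⁻ _ in absShell n, ENNReal.ofReal (exp (c * ((n : ℝ) + 2))) ∂ν :=
        setLIntegral_mono measurable_const fun x hx => ENNReal.ofReal_le_ofReal
          (exp_le_exp.mpr (mul_le_mul_of_nonneg_left (mem_absShell.mp hx).2 hc))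
    _ = ENNReal.ofReal (exp (c * ((n : ℝ) + 2))) * ν (absShell n) := setLIntegral_const _ _
    _ ≤ ENNReal.ofReal (exp (c * ((n : ℝ) + 2)))
          * ENNReal.ofReal (C * exp (-lam * ((n : ℝ) + 1))) := by gcongr
    _ = _ := by
      rw [← ENNReal.ofReal_mul (exp_pos _).le, hreal, ENNReal.ofReal_mul' (by positivity),
        ENNReal.ofReal_pow (exp_pos _).le]

lemma integrableOn_exp_mul_abs_of_tail (hc : 0 ≤ c) (hcl : c < lam) :
    IntegrableOn (fun z => exp (c * |z|)) {x : ℝ | 1 < |x|} ν := by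
  refine ⟨by fun_prop, (hasFiniteIntegral_iff_ofReal
    (Filter.Eventually.of_forall fun z => (exp_pos _).le)).mpr ?_⟩
  have hratio : ENNReal.ofReal (exp (c - lam)) < 1 := by
    rw [ENNReal.ofReal_lt_one]
    exact exp_lt_one_iff.mpr (by linarith)
  calc _ ≤ ∑' n : ℕ, ∫⁻ z in absShell n, ENNReal.ofReal (exp (c * |z|)) ∂ν :=
        (lintegral_mono_set setOf_one_lt_abs_subset_iUnion_absShell).trans
          (lintegral_iUnion_le _ _)
    _ ≤ ∑' n : ℕ,
          ENNReal.ofReal (C * exp (2 * c - lam)) * ENNReal.ofReal (exp (c - lam)) ^ n :=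
        ENNReal.tsum_le_tsum (setLIntegral_absShell_exp_mul_abs_le htail hc)
    _ = ENNReal.ofReal (C * exp (2 * c - lam)) * (1 - ENNReal.ofReal (exp (c - lam)))⁻¹ := by
        rw [ENNReal.tsum_mul_left, ENNReal.tsum_geometric]
    _ < ⊤ := ENNReal.mul_lt_top ENNReal.ofReal_lt_top
        (ENNReal.inv_lt_top.mpr (tsub_pos_iff_lt.mpr hratio))

end TailBound

theorem stmt1_general (ν : Measure ℝ) (C lam : ℝ) (hlam : 0 < lam)
    (htail : ∀ z : ℝ, 1 ≤ z → ν {x : ℝ | z < |x|} ≤ ENNReal.ofReal (C * Real.exp (-lam * z))) :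
    ∃ C' > 0, ∀ α : ℝ, 0 < α → α ≤ (min 1 lam) / 2 →
      ∫ z in {x : ℝ | 1 < |x|}, (Real.exp (α * z) - α * z - 1) ∂ν ≤ C' * α ^ 2 := by
  have hint := integrableOn_exp_mul_abs_of_tail htail (c := 3 / 4 * lam) (by positivity)
    (by linarith)
  set M := ∫ z in {x : ℝ | 1 < |x|}, exp (3 / 4 * lam * |z|) ∂ν
  have hM : 0 ≤ M := integral_nonneg fun _ => (exp_pos _).le
  refine ⟨32 / lam ^ 2 * (M + 1), by positivity, fun α hα hαmin => ?_⟩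
  have hαlam : α ≤ lam / 2 := hαmin.trans (by linarith [min_le_right 1 lam])
  have hnonneg : ∀ z : ℝ, 0 ≤ exp (α * z) - α * z - 1 := fun z => by
    linarith [add_one_le_exp (α * z)]
  calc ∫ z in {x : ℝ | 1 < |x|}, (exp (α * z) - α * z - 1) ∂ν
      ≤ ∫ z in {x : ℝ | 1 < |x|}, α ^ 2 * (32 / lam ^ 2) * exp (3 / 4 * lam * |z|) ∂ν :=
        integral_mono_of_nonneg (Filter.Eventually.of_forall hnonneg) (hint.const_mul _)
          (Filter.Eventually.of_forall (exp_mul_sub_sub_one_le hα hαlam))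
    _ = α ^ 2 * (32 / lam ^ 2) * M := integral_const_mul _ _
    _ ≤ 32 / lam ^ 2 * (M + 1) * α ^ 2 := by
        nlinarith [sq_nonneg α, show 0 < 32 / lam ^ 2 by positivity]

theorem stmt1 (ν : Measure ℝ) [SigmaFinite ν] (C lam : ℝ) (hC : 0 < C) (hlam : 0 < lam)
    (htail : ∀ z : ℝ, 1 ≤ z → ν {x : ℝ | z < |x|} ≤ ENNReal.ofReal (C * Real.exp (-lam * z)))
    (hint : Integrable (fun z => z ^ 2) ν) :
    ∃ C' > 0, ∀ α : ℝ, 0 < α → α ≤ (min 1 lam) / 2 →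
      ∫ z in {x : ℝ | 1 < |x|}, (Real.exp (α * z) - α * z - 1) ∂ν ≤ C' * α ^ 2 :=
  stmt1_general ν C lam hlam htail
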